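/- arXiv:2003.05314 — 6 statements merged into one kernel-verified Lean document; each statement's English description precedes it below -/
import Mathlib

section
/- Let X be a complex Banach space, ν a nonnegative integer, λ ∈ ℂ with |λ| < 1, and h ∈ c_0^ν(X), i.e. ‖h(n)‖/n^ν → 0. Define x_h(n) = ∑_{k=1}^{n-1} λ^{n-1-k} h(k) for n ≥ 1. Then x_h ∈ c_0^ν(X), i.e. lim_{n→∞} ‖x_h(n)‖/n^ν = 0. -/
/-!
Bounding each vector by its norm and `n^ν` from below by `k^ν` reduces the claim to the scalar
fact that the convolution of a summable sequence (here `‖λ‖^j`) with a null sequence is null,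
which is Tannery's theorem (dominated convergence for series).
-/

open Filter Topology

theorem tendsto_sum_range_mul_of_summable_of_tendsto_zero {w a : ℕ → ℝ} (hw : Summable w)
    (ha : Tendsto a atTop (𝓝 0)) :
    Tendsto (fun n ↦ ∑ k ∈ Finset.range n, w (n - 1 - k) * a k) atTop (𝓝 0) := by
  set F : ℕ → ℕ → ℝ := fun n j ↦ if j < n then w j * a (n - 1 - j) else 0
  have hF : ∀ n, ∑ k ∈ Finset.range n, w (n - 1 - k) * a k = ∑' j, F n j := by
    intro n
    rw [tsum_eq_sum (s := Finset.range n) fun j hj ↦ if_neg (by simpa using hj),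
      ← Finset.sum_range_reflect]
    refine Finset.sum_congr rfl fun j hj ↦ ?_
    rw [Finset.mem_range] at hj
    rw [if_pos hj, Nat.sub_sub_self (by omega)]
  obtain ⟨C, hC⟩ := ha.norm.bddAbove_range
  have hF_tendsto : ∀ j, Tendsto (F · j) atTop (𝓝 0) := by
    intro j
    have hshift : Tendsto (fun n ↦ n - 1 - j) atTop atTop :=
      tendsto_sub_atTop_nat j |>.comp (tendsto_sub_atTop_nat 1)
    have := (ha.comp hshift).const_mul (w j)
    rw [mul_zero] at this
    refine this.congr' ?_
    filter_upwards [eventually_gt_atTop j] with n hn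
    simp [F, hn]
  have hF_bound : ∀ n j, ‖F n j‖ ≤ C * ‖w j‖ := by
    intro n j
    by_cases hj : j < n
    · simp only [F, if_pos hj, norm_mul]
      rw [mul_comm]
      exact mul_le_mul_of_nonneg_right (hC ⟨_, rfl⟩) (norm_nonneg _)
    · simp only [F, if_neg hj, norm_zero]
      exact mul_nonneg ((norm_nonneg _).trans (hC ⟨0, rfl⟩)) (norm_nonneg _)
  simp_rw [hF]
  simpa using tendsto_tsum_of_dominated_convergence (hw.norm.mul_left C) hF_tendsto
    (.of_forall hF_bound)

theorem norm_sum_Ico_pow_smul_div_pow_le {𝕜 E : Type*} [NormedField 𝕜]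
    [SeminormedAddCommGroup E] [NormedSpace 𝕜 E] (c : 𝕜) (h : ℕ → E) (ν n : ℕ) :
    ‖∑ k ∈ Finset.Ico 1 n, c ^ (n - 1 - k) • h k‖ / (n : ℝ) ^ ν ≤
      ∑ k ∈ Finset.range n, ‖c‖ ^ (n - 1 - k) * (‖h k‖ / (k : ℝ) ^ ν) := by
  calc ‖∑ k ∈ Finset.Ico 1 n, c ^ (n - 1 - k) • h k‖ / (n : ℝ) ^ ν
      ≤ (∑ k ∈ Finset.Ico 1 n, ‖c‖ ^ (n - 1 - k) * ‖h k‖) / (n : ℝ) ^ ν := by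
        gcongr
        refine (norm_sum_le _ _).trans_eq ?_
        simp only [norm_smul, norm_pow]
    _ = ∑ k ∈ Finset.Ico 1 n, ‖c‖ ^ (n - 1 - k) * (‖h k‖ / (n : ℝ) ^ ν) := by
        simp only [Finset.sum_div, mul_div_assoc]
    _ ≤ ∑ k ∈ Finset.Ico 1 n, ‖c‖ ^ (n - 1 - k) * (‖h k‖ / (k : ℝ) ^ ν) := by
        gcongr with k hk
        · have hk1 : 1 ≤ k := (Finset.mem_Ico.mp hk).1
          positivity
        · exact (Finset.mem_Ico.mp hk).2.le
    _ ≤ ∑ k ∈ Finset.range n, ‖c‖ ^ (n - 1 - k) * (‖h k‖ / (k : ℝ) ^ ν) :=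
        Finset.sum_le_sum_of_subset_of_nonneg
          (by rw [Finset.range_eq_Ico]; exact Finset.Ico_subset_Ico_left zero_le_one)
          fun _ _ _ ↦ by positivity

theorem stmt_3_general (X : Type*) [NormedAddCommGroup X] [NormedSpace ℂ X]
    (ν : ℕ) (lam : ℂ) (hlam : ‖lam‖ < 1)
    (h : ℕ → X) (hh : Tendsto (fun n : ℕ => ‖h n‖ / (n : ℝ) ^ ν) atTop (𝓝 0)) :
    Tendsto
      (fun n : ℕ => ‖∑ k ∈ Finset.Ico 1 n, lam ^ (n - 1 - k) • h k‖ / (n : ℝ) ^ ν)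
      atTop (𝓝 0) :=
  squeeze_zero (fun _ ↦ by positivity) (norm_sum_Ico_pow_smul_div_pow_le lam h ν)
    (tendsto_sum_range_mul_of_summable_of_tendsto_zero
      (summable_geometric_of_lt_one (norm_nonneg lam) hlam) hh)

/-- If `|λ| < 1` and `‖h n‖ / n^ν → 0`, then the sequence
`x_h(n) = ∑_{k=1}^{n-1} λ^{n-1-k} h(k)` also satisfies `‖x_h n‖ / n^ν → 0`. -/
theorem stmt_3 (X : Type*) [NormedAddCommGroup X] [NormedSpace ℂ X]
    [CompleteSpace X] (ν : ℕ) (lam : ℂ) (hlam : ‖lam‖ < 1)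
    (h : ℕ → X) (hh : Tendsto (fun n : ℕ => ‖h n‖ / (n : ℝ) ^ ν) atTop (𝓝 0)) :
    Tendsto
      (fun n : ℕ => ‖∑ k ∈ Finset.Ico 1 n, lam ^ (n - 1 - k) • h k‖ / (n : ℝ) ^ ν)
      atTop (𝓝 0) :=
  stmt_3_general X ν lam hlam h hh
end

section
/- Let X be a complex Banach space, λ ∈ ℂ with |λ| > 1, ν a nonnegative integer, and f : ℕ → X with ‖f‖_ν = sup_{n≥1} ‖f(n)‖/n^ν < ∞. Then for each n the series x_f(n) = -∑_{k=n}^∞ λ^{n-k-1} f(k) converges absolutely, the sequence x_f satisfies x_f(n+1) = λ x_f(n) + f(n) for all n ≥ 1, and ‖x_f‖_ν ≤ (∑_{j=1}^∞ |λ|^{-j} j^ν) ‖f‖_ν. -/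
/-! Since `‖f k‖ ≤ M k^ν` and `n + j ≤ n (j + 1)` for `n ≥ 1`, the terms of the series defining
`x_f(n)` are dominated by `M n^ν · |λ|^{-(j+1)} (j+1)^ν`, a summable majorant whose sum gives the
weighted bound. The recurrence is the index shift `λ · λ^{-(j+1)} = λ^{-j}` followed by splitting
off the term `j = 0`. -/

section GeometricWeight

variable {𝕜 X : Type*} [NormedField 𝕜] [NormedAddCommGroup X] [NormedSpace 𝕜 X]
  {c : 𝕜} {ν : ℕ}

lemma summable_norm_pow_succ_mul_succ_pow (hc : ‖c‖ < 1) :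
    Summable fun j : ℕ => ‖c‖ ^ (j + 1) * ((j : ℝ) + 1) ^ ν := by
  have h := summable_pow_mul_geometric_of_norm_lt_one (R := ℝ) ν (r := ‖c‖) (by rwa [norm_norm])
  refine ((summable_nat_add_iff 1).2 h).congr fun j => ?_
  push_cast
  ring

lemma norm_pow_succ_smul_le {g : ℕ → X} {C : ℝ} (hg : ∀ j, ‖g j‖ ≤ C * ((j : ℝ) + 1) ^ ν)
    (j : ℕ) : ‖c ^ (j + 1) • g j‖ ≤ C * (‖c‖ ^ (j + 1) * ((j : ℝ) + 1) ^ ν) := by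
  rw [norm_smul, norm_pow, mul_left_comm]
  exact mul_le_mul_of_nonneg_left (hg j) (by positivity)

lemma summable_norm_pow_succ_smul (hc : ‖c‖ < 1) {g : ℕ → X} {C : ℝ}
    (hg : ∀ j, ‖g j‖ ≤ C * ((j : ℝ) + 1) ^ ν) :
    Summable fun j => ‖c ^ (j + 1) • g j‖ :=
  .of_nonneg_of_le (fun _ => norm_nonneg _) (norm_pow_succ_smul_le hg)
    ((summable_norm_pow_succ_mul_succ_pow hc).mul_left C)

lemma norm_tsum_pow_succ_smul_le (hc : ‖c‖ < 1) {g : ℕ → X} {C : ℝ}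
    (hg : ∀ j, ‖g j‖ ≤ C * ((j : ℝ) + 1) ^ ν) :
    ‖∑' j, c ^ (j + 1) • g j‖ ≤ (∑' j : ℕ, ‖c‖ ^ (j + 1) * ((j : ℝ) + 1) ^ ν) * C :=
  calc ‖∑' j, c ^ (j + 1) • g j‖
      ≤ ∑' j, ‖c ^ (j + 1) • g j‖ := norm_tsum_le_tsum_norm (summable_norm_pow_succ_smul hc hg)
    _ ≤ ∑' j : ℕ, C * (‖c‖ ^ (j + 1) * ((j : ℝ) + 1) ^ ν) :=
        Summable.tsum_le_tsum (norm_pow_succ_smul_le hg) (summable_norm_pow_succ_smul hc hg)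
          ((summable_norm_pow_succ_mul_succ_pow hc).mul_left C)
    _ = (∑' j : ℕ, ‖c‖ ^ (j + 1) * ((j : ℝ) + 1) ^ ν) * C := by rw [tsum_mul_left, mul_comm]

lemma Summable.norm_pow_succ_smul_of_succ {f : ℕ → X} {n : ℕ}
    (h : Summable fun j => ‖c ^ (j + 1) • f (n + 1 + j)‖) :
    Summable fun j => ‖c ^ (j + 1) • f (n + j)‖ := by
  refine (summable_nat_add_iff 1).1 ((h.mul_left ‖c‖).congr fun j => ?_)
  rw [← norm_smul, smul_smul, ← pow_succ', add_right_comm n 1 j, add_assoc n j 1]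

end GeometricWeight

lemma norm_add_le_of_div_pow_le {X : Type*} [NormedAddCommGroup X] {f : ℕ → X} {ν : ℕ} {M : ℝ}
    (hf : ∀ k : ℕ, 1 ≤ k → ‖f k‖ / (k : ℝ) ^ ν ≤ M) {n : ℕ} (hn : 1 ≤ n) (j : ℕ) :
    ‖f (n + j)‖ ≤ M * (n : ℝ) ^ ν * ((j : ℝ) + 1) ^ ν := by
  have hpow : ∀ k : ℕ, 1 ≤ k → ‖f k‖ ≤ M * (k : ℝ) ^ ν := fun k hk =>
    (div_le_iff₀ (by positivity)).1 (hf k hk)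
  have hM : 0 ≤ M := nonneg_of_mul_nonneg_left ((norm_nonneg _).trans (hpow n hn)) (by positivity)
  have hn' : (1 : ℝ) ≤ n := by exact_mod_cast hn
  have hsplit : ((n + j : ℕ) : ℝ) ≤ n * ((j : ℝ) + 1) := by
    push_cast
    nlinarith [(Nat.cast_nonneg j : (0 : ℝ) ≤ j)]
  calc ‖f (n + j)‖ ≤ M * ((n + j : ℕ) : ℝ) ^ ν := hpow _ (by omega)
    _ ≤ M * ((n : ℝ) * ((j : ℝ) + 1)) ^ ν := by gcongr
    _ = M * (n : ℝ) ^ ν * ((j : ℝ) + 1) ^ ν := by rw [mul_pow, mul_assoc]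

lemma smul_tsum_inv_pow_succ_smul {𝕜 X : Type*} [NormedField 𝕜] [NormedAddCommGroup X]
    [NormedSpace 𝕜 X] {lam : 𝕜} (hlam : lam ≠ 0) {f : ℕ → X} {n : ℕ}
    (hs : Summable fun j : ℕ => (lam⁻¹) ^ (j + 1) • f (n + j)) :
    lam • ∑' j : ℕ, (lam⁻¹) ^ (j + 1) • f (n + j) =
      f n + ∑' j : ℕ, (lam⁻¹) ^ (j + 1) • f (n + 1 + j) := by
  have hcancel : ∀ j : ℕ, lam • (lam⁻¹) ^ (j + 1) • f (n + j) = (lam⁻¹) ^ j • f (n + j) :=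
    fun j => by rw [smul_smul, pow_succ', ← mul_assoc, mul_inv_cancel₀ hlam, one_mul]
  rw [← hs.tsum_const_smul, tsum_congr hcancel,
    ((hs.const_smul lam).congr hcancel).tsum_eq_zero_add]
  simp only [pow_zero, one_smul, add_zero, add_assoc, add_comm 1]

/-- For `|λ| > 1` and `f` with `‖f n‖ / n^ν ≤ M` for `n ≥ 1`, the series
`x_f(n) = -∑_{k=n}^∞ λ^{n-k-1} f(k) = -∑_{j=0}^∞ λ^{-(j+1)} f(n+j)` converges
absolutely for each `n`, satisfies `x_f(n+1) = λ x_f(n) + f(n)` for `n ≥ 1`, and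
`‖x_f n‖ / n^ν ≤ (∑_{j=1}^∞ |λ|^{-j} j^ν) M` for `n ≥ 1`. -/
theorem stmt_5 (X : Type*) [NormedAddCommGroup X] [NormedSpace ℂ X]
    [CompleteSpace X] (ν : ℕ) (lam : ℂ) (hlam : 1 < ‖lam‖)
    (f : ℕ → X) (M : ℝ) (hf : ∀ n : ℕ, 1 ≤ n → ‖f n‖ / (n : ℝ) ^ ν ≤ M) :
    (∀ n : ℕ, Summable (fun j : ℕ => ‖(lam⁻¹) ^ (j + 1) • f (n + j)‖)) ∧
    (∀ n : ℕ, 1 ≤ n →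
      (-∑' j : ℕ, (lam⁻¹) ^ (j + 1) • f ((n + 1) + j)) =
        lam • (-∑' j : ℕ, (lam⁻¹) ^ (j + 1) • f (n + j)) + f n) ∧
    (∀ n : ℕ, 1 ≤ n →
      ‖-∑' j : ℕ, (lam⁻¹) ^ (j + 1) • f (n + j)‖ / (n : ℝ) ^ ν ≤
        (∑' j : ℕ, (‖lam‖⁻¹) ^ (j + 1) * ((j : ℝ) + 1) ^ ν) * M) := by
  have hc : ‖lam⁻¹‖ < 1 := by rw [norm_inv]; exact inv_lt_one_of_one_lt₀ hlam
  have hsum : ∀ n, Summable fun j : ℕ => ‖(lam⁻¹) ^ (j + 1) • f (n + j)‖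
    | 0 => Summable.norm_pow_succ_smul_of_succ
        (summable_norm_pow_succ_smul hc (norm_add_le_of_div_pow_le hf le_rfl))
    | n + 1 => summable_norm_pow_succ_smul hc (norm_add_le_of_div_pow_le hf n.succ_pos)
  refine ⟨hsum, fun n _ => ?_, fun n hn => ?_⟩
  · rw [smul_neg, smul_tsum_inv_pow_succ_smul (norm_pos_iff.1 (one_pos.trans hlam)) (hsum n).of_norm]
    abel
  · rw [norm_neg, div_le_iff₀ (by positivity), ← norm_inv, mul_assoc]
    exact norm_tsum_pow_succ_smul_le hc (norm_add_le_of_div_pow_le hf hn)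
end

section
/- Let X be a complex Banach space, λ ∈ ℂ with |λ| > 1, ν a nonnegative integer, and h a sequence with lim_{n→∞} ‖h(n)‖/n^ν = 0. Then the sequence x_h(n) = -∑_{k=n}^∞ λ^{n-k-1} h(k) also satisfies lim_{n→∞} ‖x_h(n)‖/n^ν = 0. -/
open Filter Topology

/- With `g m = ‖h m‖ / m^ν → 0`, the estimate `n + j ≤ n (j + 1)` (for `n ≥ 1`) gives
`‖x_h(n)‖ / n^ν ≤ ∑_j |λ|^{-(j+1)} (j + 1)^ν g(n + j)`, and the right side tends to zero by
Tannery's theorem, since `g` is bounded and `∑_j |λ|^{-(j+1)} (j + 1)^ν < ∞`. -/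

theorem tendsto_tsum_mul_shift_of_tendsto_zero {R : Type*} [NormedRing R] [CompleteSpace R]
    {c g : ℕ → R} (hc : Summable fun j => ‖c j‖) (hg : Tendsto g atTop (𝓝 0)) :
    Tendsto (fun n => ∑' j, c j * g (n + j)) atTop (𝓝 0) := by
  obtain ⟨M, hM⟩ := hg.norm.bddAbove_range
  have hM' : ∀ m, ‖g m‖ ≤ M := fun m => hM ⟨m, rfl⟩
  have hlim : ∀ j, Tendsto (fun n => c j * g (n + j)) atTop (𝓝 0) := fun j => by
    simpa using (hg.comp (tendsto_add_atTop_nat j)).const_mul (c j)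
  simpa using tendsto_tsum_of_dominated_convergence (hc.mul_right M) hlim
    (Eventually.of_forall fun n j => (norm_mul_le _ _).trans (by gcongr; exact hM' _))

theorem natCast_add_pow_le_pow_mul_succ_pow {n : ℕ} (hn : 1 ≤ n) (j ν : ℕ) :
    ((n + j : ℕ) : ℝ) ^ ν ≤ (n : ℝ) ^ ν * ((j : ℝ) + 1) ^ ν := by
  rw [← mul_pow]
  have hn' : (1 : ℝ) ≤ n := by exact_mod_cast hn
  gcongr
  push_cast
  nlinarith [Nat.cast_nonneg (α := ℝ) j]

theorem norm_shift_le_pow_mul_div_pow {E : Type*} [SeminormedAddCommGroup E] (h : ℕ → E)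
    (ν : ℕ) {n : ℕ} (hn : 1 ≤ n) (j : ℕ) :
    ‖h (n + j)‖ ≤ (n : ℝ) ^ ν * (((j : ℝ) + 1) ^ ν * (‖h (n + j)‖ / ((n + j : ℕ) : ℝ) ^ ν)) := by
  have hpos : (0 : ℝ) < ((n + j : ℕ) : ℝ) ^ ν := by
    have : 0 < n + j := by omega
    positivity
  rw [← mul_assoc, mul_div_assoc', le_div_iff₀ hpos, mul_comm ‖h (n + j)‖]
  exact mul_le_mul_of_nonneg_right (natCast_add_pow_le_pow_mul_succ_pow hn j ν)
    (norm_nonneg (h (n + j)))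

theorem tendsto_norm_tsum_smul_shift_div_pow {𝕜 E : Type*} [NormedField 𝕜]
    [SeminormedAddCommGroup E] [NormedSpace 𝕜 E] {w : ℕ → 𝕜} {h : ℕ → E} (ν : ℕ)
    (hw : Summable fun j => ‖w j‖ * ((j : ℝ) + 1) ^ ν)
    (hh : Tendsto (fun n : ℕ => ‖h n‖ / (n : ℝ) ^ ν) atTop (𝓝 0)) :
    Tendsto (fun n : ℕ => ‖∑' j, w j • h (n + j)‖ / (n : ℝ) ^ ν) atTop (𝓝 0) := by
  set g : ℕ → ℝ := fun m => ‖h m‖ / (m : ℝ) ^ ν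
  set c : ℕ → ℝ := fun j => ‖w j‖ * ((j : ℝ) + 1) ^ ν
  have hc : Summable fun j => ‖c j‖ := by
    simpa only [Real.norm_eq_abs] using hw.abs
  have hsum : ∀ n, Summable fun j => c j * g (n + j) := by
    obtain ⟨M, hM⟩ := hh.bddAbove_range
    refine fun n => Summable.of_nonneg_of_le (fun j => by positivity) (fun j => ?_) (hw.mul_right M)
    exact mul_le_mul_of_nonneg_left (hM ⟨n + j, rfl⟩) (by positivity)
  have hbound : ∀ n, 1 ≤ n →
      ‖∑' j, w j • h (n + j)‖ / (n : ℝ) ^ ν ≤ ∑' j, c j * g (n + j) := by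
    intro n hn
    have hnpos : (0 : ℝ) < (n : ℝ) ^ ν := by
      have : (1 : ℝ) ≤ n := by exact_mod_cast hn
      positivity
    rw [div_le_iff₀ hnpos, mul_comm, ← tsum_mul_left]
    refine tsum_of_norm_bounded ((hsum n).mul_left _).hasSum fun j => ?_
    calc ‖w j • h (n + j)‖ = ‖w j‖ * ‖h (n + j)‖ := norm_smul _ _
      _ ≤ ‖w j‖ * ((n : ℝ) ^ ν * (((j : ℝ) + 1) ^ ν * g (n + j))) := by
        gcongr
        exact norm_shift_le_pow_mul_div_pow h ν hn j
      _ = (n : ℝ) ^ ν * (c j * g (n + j)) := by ring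
  refine squeeze_zero' (Eventually.of_forall fun n => by positivity)
    (eventually_atTop.mpr ⟨1, hbound⟩) ?_
  exact tendsto_tsum_mul_shift_of_tendsto_zero hc hh

theorem stmt_6_general (X : Type*) [NormedAddCommGroup X] [NormedSpace ℂ X]
    (ν : ℕ) (lam : ℂ) (hlam : 1 < ‖lam‖)
    (h : ℕ → X) (hh : Tendsto (fun n : ℕ => ‖h n‖ / (n : ℝ) ^ ν) atTop (𝓝 0)) :
    Tendsto
      (fun n : ℕ => ‖-∑' j : ℕ, (lam⁻¹) ^ (j + 1) • h (n + j)‖ / (n : ℝ) ^ ν)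
      atTop (𝓝 0) := by
  have hr : ‖‖lam‖⁻¹‖ < 1 := by
    rw [norm_inv, norm_norm]
    exact inv_lt_one_of_one_lt₀ hlam
  have hw : Summable fun j : ℕ => ‖lam⁻¹ ^ (j + 1)‖ * ((j : ℝ) + 1) ^ ν := by
    have := (summable_nat_add_iff (f := fun j : ℕ => (j : ℝ) ^ ν * ‖lam‖⁻¹ ^ j) 1).mpr
      (summable_pow_mul_geometric_of_norm_lt_one ν hr)
    refine this.congr fun j => ?_
    rw [norm_pow, norm_inv, Nat.cast_succ, mul_comm]
  simpa only [norm_neg] using tendsto_norm_tsum_smul_shift_div_pow ν hw hh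

/-- For `|λ| > 1` and a sequence `h` with `‖h n‖ / n^ν → 0`, the sequence
`x_h(n) = -∑_{k=n}^∞ λ^{n-k-1} h(k) = -∑_{j=0}^∞ λ^{-(j+1)} h(n+j)` also
satisfies `‖x_h n‖ / n^ν → 0`. -/
theorem stmt_6 (X : Type*) [NormedAddCommGroup X] [NormedSpace ℂ X]
    [CompleteSpace X] (ν : ℕ) (lam : ℂ) (hlam : 1 < ‖lam‖)
    (h : ℕ → X) (hh : Tendsto (fun n : ℕ => ‖h n‖ / (n : ℝ) ^ ν) atTop (𝓝 0)) :
    Tendsto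
      (fun n : ℕ => ‖-∑' j : ℕ, (lam⁻¹) ^ (j + 1) • h (n + j)‖ / (n : ℝ) ^ ν)
      atTop (𝓝 0) :=
  stmt_6_general X ν lam hlam h hh
end

section
/- Let T be a bounded linear operator on a complex Banach space X, α > 0, and define S_α(n) = ∑_{j=0}^n (Γ(n - j + (j+1)α)/(Γ(n - j + 1) Γ(jα + α))) T^j for n ≥ 0. Then S_α(0) = I and S_α satisfies the resolvent recursion S_α(n+1) = k^α(n+1) I + T ∑_{j=0}^n k^α(n - j) S_α(j) for all n ≥ 0, where k^α(j) = Γ(α + j)/(Γ(α) Γ(j + 1)). -/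
/-- The fractional difference kernel `k^α(j) = Γ(α+j)/(Γ(α)Γ(j+1))`. -/
noncomputable def fracKernel (α : ℝ) (j : ℕ) : ℝ :=
  Real.Gamma (α + j) / (Real.Gamma α * Real.Gamma (j + 1))

/-- The explicit `α`-resolvent sequence
`S_α(n) = ∑_{j=0}^n Γ(n-j+(j+1)α)/(Γ(n-j+1)Γ(jα+α)) T^j`. -/
noncomputable def resolventSeq {X : Type*} [NormedAddCommGroup X] [NormedSpace ℂ X]
    (T : X →L[ℂ] X) (α : ℝ) (n : ℕ) : X →L[ℂ] X :=
  ∑ j ∈ Finset.range (n + 1),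
    (Real.Gamma ((n : ℝ) - j + (j + 1) * α) /
      (Real.Gamma ((n : ℝ) - j + 1) * Real.Gamma (j * α + α))) • T ^ j

/-! The coefficient of `T ^ j` in `S_α(n)` is `k^{(j+1)α}(n - j)`, and the kernels form a
convolution semigroup, `k^α * k^β = k^{α+β}`: for `γ > 0`, `k^γ(j) = γ(γ+1)⋯(γ+j-1)/j!` is a
multichoose coefficient, so this is the Chu–Vandermonde identity at `-α` and `-β`. Expanding
`T ∑ k^α(n-j) S_α(j)` and regrouping the triple sum by the power of `T` yields
`∑ k^{(i+2)α}(n-i) T^(i+1)`, which is `S_α(n+1)` without its `T ^ 0` term `k^α(n+1) I`. -/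

open Finset Polynomial

theorem Real.Gamma_add_nat_eq_ascPochhammer_eval_mul {γ : ℝ} (hγ : 0 < γ) (n : ℕ) :
    Real.Gamma (γ + n) = (ascPochhammer ℝ n).eval γ * Real.Gamma γ := by
  induction n with
  | zero => simp
  | succ n ih =>
    rw [Nat.cast_succ, ← add_assoc, Real.Gamma_add_one (by positivity), ih,
      ascPochhammer_succ_eval]
    ring

theorem Ring.multichoose_add {R : Type*} [Ring R] [BinomialRing R] {r s : R} (h : Commute r s)
    (k : ℕ) :
    multichoose (r + s) k = ∑ ij ∈ antidiagonal k, multichoose r ij.1 * multichoose s ij.2 := by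
  have hneg := add_choose_eq k h.neg_left.neg_right
  rw [← neg_add, choose_neg'] at hneg
  have hsign : ∀ ij ∈ antidiagonal k, choose (-r) ij.1 * choose (-s) ij.2 =
      Int.negOnePow k • (multichoose r ij.1 * multichoose s ij.2) := by
    intro ij hij
    rw [choose_neg', choose_neg', smul_mul_smul_comm, ← Int.negOnePow_add, ← Nat.cast_add,
      mem_antidiagonal.mp hij]
  rw [sum_congr rfl hsign, ← smul_sum] at hneg
  exact (smul_left_cancel_iff _).mp hneg

theorem fracKernel_eq_multichoose {γ : ℝ} (hγ : 0 < γ) (j : ℕ) :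
    fracKernel γ j = Ring.multichoose γ j := by
  have hfac := Ring.factorial_nsmul_multichoose_eq_ascPochhammer γ j
  rw [ascPochhammer_smeval_eq_eval, nsmul_eq_mul] at hfac
  have hΓ := (Real.Gamma_pos_of_pos hγ).ne'
  rw [fracKernel, Real.Gamma_add_nat_eq_ascPochhammer_eval_mul hγ, Real.Gamma_nat_eq_factorial,
    ← hfac]
  field_simp

theorem fracKernel_add {α β : ℝ} (hα : 0 < α) (hβ : 0 < β) (n : ℕ) :
    fracKernel (α + β) n = ∑ ij ∈ antidiagonal n, fracKernel α ij.1 * fracKernel β ij.2 := by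
  simp only [fracKernel_eq_multichoose (add_pos hα hβ), fracKernel_eq_multichoose hα,
    fracKernel_eq_multichoose hβ, Ring.multichoose_add (Commute.all α β)]

theorem Finset.Nat.sum_antidiagonal_sum_antidiagonal {M : Type*} [AddCommMonoid M]
    (f : ℕ → ℕ → ℕ → M) (n : ℕ) :
    ∑ p ∈ antidiagonal n, ∑ q ∈ antidiagonal p.1, f q.1 q.2 p.2 =
      ∑ p ∈ antidiagonal n, ∑ q ∈ antidiagonal p.2, f p.1 q.1 q.2 := by
  rw [sum_sigma', sum_sigma']
  refine sum_nbij' (fun x ↦ ⟨(x.2.1, x.2.2 + x.1.2), (x.2.2, x.1.2)⟩)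
    (fun y ↦ ⟨(y.1.1 + y.2.1, y.2.2), (y.1.1, y.2.1)⟩) ?_ ?_ ?_ ?_ ?_
  all_goals
    rintro ⟨⟨a, b⟩, c, d⟩
    simp only [mem_sigma, HasAntidiagonal.mem_antidiagonal]
    grind

section

variable {X : Type*} [NormedAddCommGroup X] [NormedSpace ℂ X] (T : X →L[ℂ] X)

theorem resolventSeq_eq_sum_antidiagonal (α : ℝ) (n : ℕ) :
    resolventSeq T α n = ∑ p ∈ antidiagonal n, fracKernel ((p.1 + 1) * α) p.2 • T ^ p.1 := by
  rw [Nat.sum_antidiagonal_eq_sum_range_succ (fun j m ↦ fracKernel ((j + 1) * α) m • T ^ j),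
    resolventSeq]
  refine sum_congr rfl fun j hj ↦ ?_
  have hjn : j ≤ n := Nat.lt_succ_iff.mp (mem_range.mp hj)
  rw [fracKernel, Nat.cast_sub hjn, add_one_mul (j : ℝ) α, add_comm (_ * α + α),
    mul_comm (Real.Gamma (_ * α + α))]

theorem resolventSeq_zero {α : ℝ} (hα : 0 < α) : resolventSeq T α 0 = 1 := by
  simp [resolventSeq, (Real.Gamma_pos_of_pos hα).ne']

theorem resolventSeq_succ {α : ℝ} (hα : 0 < α) (n : ℕ) :
    resolventSeq T α (n + 1) = fracKernel α (n + 1) • (1 : X →L[ℂ] X) +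
      T * ∑ j ∈ range (n + 1), fracKernel α (n - j) • resolventSeq T α j := by
  have hconv : ∀ i m : ℕ, ∑ q ∈ antidiagonal m, fracKernel α q.2 * fracKernel ((i + 1) * α) q.1
      = fracKernel ((((i + 1 : ℕ) : ℝ) + 1) * α) m := by
    intro i m
    rw [show (((i + 1 : ℕ) : ℝ) + 1) * α = (i + 1) * α + α by push_cast; ring,
      fracKernel_add (by positivity) hα]
    simp only [mul_comm]
  rw [← Nat.sum_antidiagonal_eq_sum_range_succ (fun j m ↦ fracKernel α m • resolventSeq T α j)]
  simp only [resolventSeq_eq_sum_antidiagonal, smul_sum, smul_smul]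
  rw [Nat.sum_antidiagonal_sum_antidiagonal
    (fun i m a ↦ (fracKernel α a * fracKernel ((i + 1) * α) m) • T ^ i)]
  simp only [← sum_smul, hconv, Nat.sum_antidiagonal_succ, mul_sum, mul_smul_comm, ← pow_succ']
  simp only [CharP.cast_eq_zero, zero_add, one_mul, pow_zero, Nat.cast_add, Nat.cast_one]

end

theorem stmt_13_general (X : Type*) [NormedAddCommGroup X] [NormedSpace ℂ X]
    (T : X →L[ℂ] X) (α : ℝ) (hα : 0 < α) :
    resolventSeq T α 0 = 1 ∧
    ∀ n : ℕ, resolventSeq T α (n + 1) =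
      fracKernel α (n + 1) • (1 : X →L[ℂ] X) +
        T * ∑ j ∈ Finset.range (n + 1), fracKernel α (n - j) • resolventSeq T α j := by
  exact ⟨resolventSeq_zero T hα, resolventSeq_succ T hα⟩

/-- `S_α(0) = I` and `S_α` satisfies the resolvent recursion
`S_α(n+1) = k^α(n+1) I + T ∑_{j=0}^n k^α(n-j) S_α(j)`. -/
theorem stmt_13 (X : Type*) [NormedAddCommGroup X] [NormedSpace ℂ X] [CompleteSpace X]
    (T : X →L[ℂ] X) (α : ℝ) (hα : 0 < α) :
    resolventSeq T α 0 = 1 ∧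
    ∀ n : ℕ, resolventSeq T α (n + 1) =
      fracKernel α (n + 1) • (1 : X →L[ℂ] X) +
        T * ∑ j ∈ Finset.range (n + 1), fracKernel α (n - j) • resolventSeq T α j :=
  stmt_13_general X T α hα
end

section
/- Let X be a complex Banach space, λ ∈ ℂ with 0 < |λ| ≠ 1, and f : ℕ → X a sequence with sup_{n≥1} ‖f(n)‖/n^ν < ∞ for some nonnegative integer ν. Then there exists a sequence x with sup_{n≥1} ‖x(n)‖/n^ν < ∞ satisfying x(n+1) = λ x(n) + f(n) for all n ≥ 1; moreover, any two such solutions differ by a sequence h with sup ‖h(n)‖/n^ν < ∞ of the form h(n) = λ^{n-1} h(1), and if |λ| < 1 then h ∈ c_0^ν(X). -/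
/-!
For `|λ| < 1` the forward variation-of-constants sum `x(n) = ∑_{1≤k<n} λ^{n-1-k} f(k)` is a
solution, and if `‖f(k)‖ ≤ M k^ν` it is bounded by `M n^ν` times a convergent geometric series.
For `|λ| > 1` one solves backwards, `x(n) = -∑_{j≥0} λ^{-(j+1)} f(n+j)`; since
`(n+j)^ν ≤ n^ν (j+1)^ν`, this series converges and is again `O(n^ν)` because
`∑ (j+1)^ν |λ|^{-(j+1)} < ∞`. The difference of two solutions solves the homogeneous equation,
so it is `λ^{n-1} h(1)`, which decays geometrically when `|λ| < 1`.
-/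

open Filter Topology

def PolyBounded {E : Type*} [Norm E] (ν : ℕ) (x : ℕ → E) : Prop :=
  ∃ M : ℝ, ∀ n : ℕ, 1 ≤ n → ‖x n‖ ≤ M * (n : ℝ) ^ ν

section PolyBounded

variable {E : Type*} [SeminormedAddCommGroup E] {ν : ℕ} {x : ℕ → E}

theorem PolyBounded.exists_nonneg (hx : PolyBounded ν x) :
    ∃ M : ℝ, 0 ≤ M ∧ ∀ n : ℕ, 1 ≤ n → ‖x n‖ ≤ M * (n : ℝ) ^ ν := by
  obtain ⟨M, hM⟩ := hx
  refine ⟨M, ?_, hM⟩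
  simpa using (norm_nonneg _).trans (hM 1 le_rfl)

theorem norm_shift_le_of_bound {M : ℝ} (hM0 : 0 ≤ M)
    (hM : ∀ n : ℕ, 1 ≤ n → ‖x n‖ ≤ M * (n : ℝ) ^ ν) {n : ℕ} (hn : 1 ≤ n) (j : ℕ) :
    ‖x (n + j)‖ ≤ M * (n : ℝ) ^ ν * ((j : ℝ) + 1) ^ ν := by
  have hn' : (1 : ℝ) ≤ n := by exact_mod_cast hn
  calc ‖x (n + j)‖ ≤ M * ((n + j : ℕ) : ℝ) ^ ν := hM _ (by omega)
    _ ≤ M * ((n : ℝ) * ((j : ℝ) + 1)) ^ ν := by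
        gcongr
        push_cast
        nlinarith [(j.cast_nonneg : (0 : ℝ) ≤ j)]
    _ = M * (n : ℝ) ^ ν * ((j : ℝ) + 1) ^ ν := by rw [mul_pow, mul_assoc]

end PolyBounded

theorem sum_Ico_pow_sub_le_inv_one_sub {r : ℝ} (h0 : 0 ≤ r) (h1 : r < 1) (n : ℕ) :
    ∑ k ∈ Finset.Ico 1 n, r ^ (n - 1 - k) ≤ (1 - r)⁻¹ := by
  rw [Finset.sum_Ico_eq_sum_range]
  have hreindex : ∀ k ∈ Finset.range (n - 1), r ^ (n - 1 - (1 + k)) = r ^ (n - 1 - 1 - k) :=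
    fun k _ => by congr 1; omega
  rw [Finset.sum_congr rfl hreindex, Finset.sum_range_reflect (fun j => r ^ j),
    ← tsum_geometric_of_lt_one h0 h1]
  exact (summable_geometric_of_lt_one h0 h1).sum_le_tsum _ fun i _ => pow_nonneg h0 i

section Forward

variable {𝕜 E : Type*}

/-- The solution of `x(n+1) = λ x(n) + f(n)` with `x(1) = 0`. -/
def forwardSolution [Monoid 𝕜] [AddCommMonoid E] [DistribMulAction 𝕜 E] (lam : 𝕜) (f : ℕ → E)
    (n : ℕ) : E :=
  ∑ k ∈ Finset.Ico 1 n, lam ^ (n - 1 - k) • f k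

theorem forwardSolution_succ [Monoid 𝕜] [AddCommMonoid E] [DistribMulAction 𝕜 E] (lam : 𝕜)
    (f : ℕ → E) {n : ℕ} (hn : 1 ≤ n) :
    forwardSolution lam f (n + 1) = lam • forwardSolution lam f n + f n := by
  unfold forwardSolution
  rw [Finset.sum_Ico_succ_top hn, Finset.smul_sum, Nat.add_sub_cancel, Nat.sub_self, pow_zero,
    one_smul]
  congr 1
  refine Finset.sum_congr rfl fun k hk => ?_
  rw [smul_smul, ← pow_succ']
  congr 2
  have := (Finset.mem_Ico.mp hk).2
  omega

theorem polyBounded_forwardSolution [NormedField 𝕜] [SeminormedAddCommGroup E] [NormedSpace 𝕜 E]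
    {ν : ℕ} {lam : 𝕜} (hlam : ‖lam‖ < 1) {f : ℕ → E} (hf : PolyBounded ν f) :
    PolyBounded ν (forwardSolution lam f) := by
  obtain ⟨M, hM0, hM⟩ := hf.exists_nonneg
  refine ⟨(1 - ‖lam‖)⁻¹ * M, fun n hn => ?_⟩
  calc ‖forwardSolution lam f n‖
      ≤ ∑ k ∈ Finset.Ico 1 n, ‖lam ^ (n - 1 - k) • f k‖ := norm_sum_le _ _
    _ ≤ ∑ k ∈ Finset.Ico 1 n, ‖lam‖ ^ (n - 1 - k) * (M * (n : ℝ) ^ ν) := by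
        refine Finset.sum_le_sum fun k hk => ?_
        obtain ⟨hk1, hkn⟩ := Finset.mem_Ico.mp hk
        rw [norm_smul, norm_pow]
        gcongr
        exact (hM k hk1).trans (by gcongr)
    _ = (∑ k ∈ Finset.Ico 1 n, ‖lam‖ ^ (n - 1 - k)) * (M * (n : ℝ) ^ ν) := by
        rw [Finset.sum_mul]
    _ ≤ (1 - ‖lam‖)⁻¹ * (M * (n : ℝ) ^ ν) := by
        gcongr
        exact sum_Ico_pow_sub_le_inv_one_sub (norm_nonneg _) hlam n
    _ = (1 - ‖lam‖)⁻¹ * M * (n : ℝ) ^ ν := by ring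

end Forward

section Backward

variable {𝕜 E : Type*} [NormedField 𝕜] [NormedAddCommGroup E] [NormedSpace 𝕜 E]

/-- The solution of `x(n+1) = λ x(n) + f(n)` obtained by solving backwards from infinity;
meaningful for `‖λ‖ > 1`. -/
noncomputable def backwardSolution (lam : 𝕜) (f : ℕ → E) (n : ℕ) : E :=
  -∑' j : ℕ, lam⁻¹ ^ (j + 1) • f (n + j)

theorem backwardSolution_succ {lam : 𝕜} (hlam : lam ≠ 0) {f : ℕ → E} {n : ℕ}
    (hsum : Summable fun j : ℕ => lam⁻¹ ^ (j + 1) • f (n + j)) :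
    backwardSolution lam f (n + 1) = lam • backwardSolution lam f n + f n := by
  have hunfold : lam • ∑' j : ℕ, lam⁻¹ ^ (j + 1) • f (n + j)
      = f n + ∑' j : ℕ, lam⁻¹ ^ (j + 1) • f (n + 1 + j) := by
    rw [hsum.tsum_eq_zero_add, smul_add, ← ((summable_nat_add_iff 1).2 hsum).tsum_const_smul lam]
    simp only [zero_add, pow_one, smul_smul, add_zero, mul_inv_cancel₀ hlam, one_smul]
    congr 1
    refine tsum_congr fun j => ?_
    rw [pow_succ' _ (j + 1), ← mul_assoc, mul_inv_cancel₀ hlam, one_mul, add_right_comm, add_assoc]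
  unfold backwardSolution
  rw [smul_neg, hunfold]
  abel

variable {ν : ℕ} {lam : 𝕜} {f : ℕ → E} {M : ℝ}

theorem summable_backward_majorant (hlam : 1 < ‖lam‖) :
    Summable fun j : ℕ => ((j : ℝ) + 1) ^ ν * ‖lam‖⁻¹ ^ (j + 1) := by
  have hr : ‖‖lam‖⁻¹‖ < 1 := by
    rw [norm_inv, norm_norm]
    exact inv_lt_one_of_one_lt₀ hlam
  simpa using (summable_nat_add_iff (G := ℝ) 1).2
    (summable_pow_mul_geometric_of_norm_lt_one (R := ℝ) ν hr)

theorem norm_backward_term_le (hM0 : 0 ≤ M) (hM : ∀ n : ℕ, 1 ≤ n → ‖f n‖ ≤ M * (n : ℝ) ^ ν)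
    {n : ℕ} (hn : 1 ≤ n) (j : ℕ) :
    ‖lam⁻¹ ^ (j + 1) • f (n + j)‖ ≤ M * (n : ℝ) ^ ν * (((j : ℝ) + 1) ^ ν * ‖lam‖⁻¹ ^ (j + 1)) := by
  rw [norm_smul, norm_pow, norm_inv]
  calc ‖lam‖⁻¹ ^ (j + 1) * ‖f (n + j)‖
      ≤ ‖lam‖⁻¹ ^ (j + 1) * (M * (n : ℝ) ^ ν * ((j : ℝ) + 1) ^ ν) := by
        gcongr
        exact norm_shift_le_of_bound hM0 hM hn j
    _ = M * (n : ℝ) ^ ν * (((j : ℝ) + 1) ^ ν * ‖lam‖⁻¹ ^ (j + 1)) := by ring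

theorem polyBounded_backwardSolution (hlam : 1 < ‖lam‖) (hf : PolyBounded ν f) :
    PolyBounded ν (backwardSolution lam f) := by
  obtain ⟨M, hM0, hM⟩ := hf.exists_nonneg
  set T := ∑' j : ℕ, ((j : ℝ) + 1) ^ ν * ‖lam‖⁻¹ ^ (j + 1)
  refine ⟨M * T, fun n hn => ?_⟩
  rw [backwardSolution, norm_neg, mul_right_comm]
  exact tsum_of_norm_bounded ((summable_backward_majorant hlam).hasSum.mul_left _)
    (norm_backward_term_le hM0 hM hn)

variable [CompleteSpace E]

theorem summable_backward (hlam : 1 < ‖lam‖) (hf : PolyBounded ν f) {n : ℕ} (hn : 1 ≤ n) :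
    Summable fun j : ℕ => lam⁻¹ ^ (j + 1) • f (n + j) := by
  obtain ⟨M, hM0, hM⟩ := hf.exists_nonneg
  exact Summable.of_norm_bounded ((summable_backward_majorant hlam).mul_left _)
    (norm_backward_term_le hM0 hM hn)

end Backward

theorem exists_polyBounded_solution {𝕜 E : Type*} [NormedField 𝕜] [NormedAddCommGroup E]
    [NormedSpace 𝕜 E] [CompleteSpace E] {ν : ℕ} {lam : 𝕜} (hlam : ‖lam‖ ≠ 1) {f : ℕ → E}
    (hf : PolyBounded ν f) :
    ∃ x : ℕ → E, PolyBounded ν x ∧ ∀ n : ℕ, 1 ≤ n → x (n + 1) = lam • x n + f n := by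
  rcases hlam.lt_or_gt with hlt | hgt
  · exact ⟨forwardSolution lam f, polyBounded_forwardSolution hlt hf,
      fun n hn => forwardSolution_succ lam f hn⟩
  · have hne : lam ≠ 0 := norm_pos_iff.mp (one_pos.trans hgt)
    exact ⟨backwardSolution lam f, polyBounded_backwardSolution hgt hf,
      fun n hn => backwardSolution_succ hne (summable_backward hgt hf hn)⟩

theorem eq_pow_smul_of_succ_eq_smul {M α : Type*} [Monoid M] [MulAction M α] {lam : M}
    {h : ℕ → α} (hh : ∀ n : ℕ, 1 ≤ n → h (n + 1) = lam • h n) {n : ℕ} (hn : 1 ≤ n) :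
    h n = lam ^ (n - 1) • h 1 := by
  induction n, hn using Nat.le_induction with
  | base => simp
  | succ n hn ih => rw [hh n hn, ih, smul_smul, ← pow_succ', Nat.sub_add_comm hn]

theorem tendsto_norm_pow_smul_div_pow_atTop {𝕜 E : Type*} [NormedField 𝕜]
    [SeminormedAddCommGroup E] [NormedSpace 𝕜 E] {lam : 𝕜} (hlam : ‖lam‖ < 1) (v : E) (ν : ℕ) :
    Tendsto (fun n : ℕ => ‖lam ^ (n - 1) • v‖ / (n : ℝ) ^ ν) atTop (𝓝 0) := by
  have hgeom : Tendsto (fun n : ℕ => ‖lam‖ ^ (n - 1) * ‖v‖) atTop (𝓝 0) := by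
    simpa using ((tendsto_pow_atTop_nhds_zero_of_lt_one (norm_nonneg _) hlam).comp
      (tendsto_sub_atTop_nat 1)).mul_const ‖v‖
  refine squeeze_zero' (Eventually.of_forall fun n => by positivity) ?_ hgeom
  filter_upwards [eventually_ge_atTop 1] with n hn
  rw [norm_smul, norm_pow]
  exact div_le_self (by positivity) (one_le_pow₀ (by exact_mod_cast hn))

theorem stmt_16_general (X : Type*) [NormedAddCommGroup X] [NormedSpace ℂ X]
    [CompleteSpace X] (ν : ℕ) (lam : ℂ)
    (hlam1 : ‖lam‖ ≠ 1) (f : ℕ → X)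
    (hf : ∃ M : ℝ, ∀ n : ℕ, 1 ≤ n → ‖f n‖ ≤ M * (n : ℝ) ^ ν) :
    (∃ x : ℕ → X, (∃ M : ℝ, ∀ n : ℕ, 1 ≤ n → ‖x n‖ ≤ M * (n : ℝ) ^ ν) ∧
      ∀ n : ℕ, 1 ≤ n → x (n + 1) = lam • x n + f n) ∧
    (∀ x₁ x₂ : ℕ → X,
      (∃ M : ℝ, ∀ n : ℕ, 1 ≤ n → ‖x₁ n‖ ≤ M * (n : ℝ) ^ ν) →
      (∃ M : ℝ, ∀ n : ℕ, 1 ≤ n → ‖x₂ n‖ ≤ M * (n : ℝ) ^ ν) →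
      (∀ n : ℕ, 1 ≤ n → x₁ (n + 1) = lam • x₁ n + f n) →
      (∀ n : ℕ, 1 ≤ n → x₂ (n + 1) = lam • x₂ n + f n) →
      (∀ n : ℕ, 1 ≤ n → x₁ n - x₂ n = lam ^ (n - 1) • (x₁ 1 - x₂ 1)) ∧
      (‖lam‖ < 1 →
        Tendsto (fun n : ℕ => ‖x₁ n - x₂ n‖ / (n : ℝ) ^ ν) atTop (𝓝 0))) := by
  refine ⟨exists_polyBounded_solution hlam1 hf, fun x₁ x₂ _ _ hx₁ hx₂ => ?_⟩
  have hhom : ∀ n : ℕ, 1 ≤ n → (x₁ - x₂) (n + 1) = lam • (x₁ - x₂) n := fun n hn => by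
    simp only [Pi.sub_apply, hx₁ n hn, hx₂ n hn, smul_sub]
    abel
  have hform : ∀ n : ℕ, 1 ≤ n → x₁ n - x₂ n = lam ^ (n - 1) • (x₁ 1 - x₂ 1) :=
    fun n hn => eq_pow_smul_of_succ_eq_smul hhom hn
  refine ⟨hform, fun hlt => (tendsto_norm_pow_smul_div_pow_atTop hlt (x₁ 1 - x₂ 1) ν).congr' ?_⟩
  filter_upwards [eventually_ge_atTop 1] with n hn
  rw [hform n hn]

/-- For `0 < |λ| ≠ 1` and `f` with `sup_{n≥1} ‖f n‖/n^ν < ∞`, the difference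
equation `x(n+1) = λ x(n) + f(n)` (`n ≥ 1`) has a solution `x` with
`sup_{n≥1} ‖x n‖/n^ν < ∞`; moreover, the difference `h = x₁ - x₂` of any two
such solutions satisfies `h(n) = λ^{n-1} h(1)` for `n ≥ 1`, and if `|λ| < 1`
then `‖h n‖/n^ν → 0`. -/
theorem stmt_16 (X : Type*) [NormedAddCommGroup X] [NormedSpace ℂ X]
    [CompleteSpace X] (ν : ℕ) (lam : ℂ) (hlam0 : 0 < ‖lam‖)
    (hlam1 : ‖lam‖ ≠ 1) (f : ℕ → X)
    (hf : ∃ M : ℝ, ∀ n : ℕ, 1 ≤ n → ‖f n‖ ≤ M * (n : ℝ) ^ ν) :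
    (∃ x : ℕ → X, (∃ M : ℝ, ∀ n : ℕ, 1 ≤ n → ‖x n‖ ≤ M * (n : ℝ) ^ ν) ∧
      ∀ n : ℕ, 1 ≤ n → x (n + 1) = lam • x n + f n) ∧
    (∀ x₁ x₂ : ℕ → X,
      (∃ M : ℝ, ∀ n : ℕ, 1 ≤ n → ‖x₁ n‖ ≤ M * (n : ℝ) ^ ν) →
      (∃ M : ℝ, ∀ n : ℕ, 1 ≤ n → ‖x₂ n‖ ≤ M * (n : ℝ) ^ ν) →
      (∀ n : ℕ, 1 ≤ n → x₁ (n + 1) = lam • x₁ n + f n) →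
      (∀ n : ℕ, 1 ≤ n → x₂ (n + 1) = lam • x₂ n + f n) →
      (∀ n : ℕ, 1 ≤ n → x₁ n - x₂ n = lam ^ (n - 1) • (x₁ 1 - x₂ 1)) ∧
      (‖lam‖ < 1 →
        Tendsto (fun n : ℕ => ‖x₁ n - x₂ n‖ / (n : ℝ) ^ ν) atTop (𝓝 0))) :=
  stmt_16_general X ν lam hlam1 f hf
end

section
/- Let ν be a nonnegative integer, r > 0, C > 0, and suppose (a_j)_{j∈ℤ} are elements of a complex Banach space such that for every integer n, ‖∑_{k=0}^{ν+1} binom(ν+1, k) r^{2ν-2k} a_{n-2k}‖ ≤ C 4^{ν+1} r^{ν-n-1} holds for all sufficiently small r > 0. Then a_j = 0 for all integers j ≤ -ν - 2. -/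
/-!
Take `n = j + 2ν + 2`, so that the last term of the sum (`k = ν + 1`) is `r⁻² a_j`. After
multiplication by `r²` the sum becomes a polynomial in `r²` with constant term `a_j`, so it tends
to `a_j` as `r → 0⁺`. On the other hand its norm is at most `C 4^(ν+1) r^(-ν-j-1)`, and the
exponent `-ν - j - 1` is positive, so the limit is `0`.
-/

open Filter Topology Finset

theorem tendsto_sum_pow_smul_nhds_zero {R E : Type*} [Semiring R] [TopologicalSpace R]
    [IsTopologicalSemiring R] [AddCommMonoid E] [Module R E] [TopologicalSpace E]
    [ContinuousAdd E] [ContinuousSMul R E] (N : ℕ) (b : ℕ → E) :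
    Tendsto (fun s : R => ∑ k ∈ range (N + 1), s ^ (N - k) • b k) (𝓝 0) (𝓝 (b N)) := by
  have hcont : Continuous fun s : R => ∑ k ∈ range (N + 1), s ^ (N - k) • b k := by fun_prop
  convert hcont.tendsto 0 using 2
  rw [sum_range_succ, sum_eq_zero fun k hk => ?_, Nat.sub_self, pow_zero, one_smul, zero_add]
  rw [zero_pow (by rw [mem_range] at hk; omega), zero_smul]

theorem tendsto_nhdsGT_zero_of_norm_le_mul_zpow {E : Type*} [SeminormedAddCommGroup E]
    {f : ℝ → E} {K : ℝ} {m : ℤ} (hm : 0 < m)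
    (hf : ∀ᶠ r in 𝓝[>] 0, ‖f r‖ ≤ K * r ^ m) :
    Tendsto f (𝓝[>] 0) (𝓝 0) := by
  have hpow : Tendsto (fun r : ℝ => K * r ^ m) (𝓝 0) (𝓝 (K * 0 ^ m)) :=
    ((continuousAt_zpow₀ (0 : ℝ) m (Or.inr hm.le)).const_mul K).tendsto
  rw [zero_zpow m hm.ne', mul_zero] at hpow
  exact squeeze_zero_norm' hf (hpow.mono_left nhdsWithin_le_nhds)

theorem zpow_two_mul_zpow_sub_eq_sq_pow {G₀ : Type*} [GroupWithZero G₀] {r : G₀}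
    (hr : r ≠ 0) {ν k : ℕ} (hk : k ≤ ν + 1) :
    r ^ (2 : ℤ) * r ^ (2 * (ν : ℤ) - 2 * k) = (r ^ 2) ^ (ν + 1 - k) := by
  rw [← zpow_add₀ hr, ← pow_mul, ← zpow_natCast]
  congr 1
  push_cast [Nat.cast_sub hk]
  ring

theorem zpow_two_smul_sum_eq_sum_sq_pow_smul {𝕜 E : Type*} [Semifield 𝕜] [AddCommMonoid E]
    [Module 𝕜 E] {r : 𝕜} (hr : r ≠ 0) (ν : ℕ) (c : ℕ → 𝕜) (b : ℕ → E) :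
    r ^ (2 : ℤ) • ∑ k ∈ range (ν + 2), c k • (r ^ (2 * (ν : ℤ) - 2 * k) • b k) =
      ∑ k ∈ range (ν + 2), (r ^ 2) ^ (ν + 1 - k) • (c k • b k) := by
  rw [smul_sum]
  refine sum_congr rfl fun k hk => ?_
  have hk' : k ≤ ν + 1 := by rw [mem_range] at hk; omega
  rw [smul_comm (c k), smul_smul, zpow_two_mul_zpow_sub_eq_sq_pow hr hk']

theorem stmt_19_general (X : Type*) [NormedAddCommGroup X] [NormedSpace ℂ X]
    (ν : ℕ) (C : ℝ) (a : ℤ → X)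
    (ha : ∀ n : ℤ, ∃ ε : ℝ, 0 < ε ∧ ∀ r : ℝ, 0 < r → r < ε →
      ‖∑ k ∈ Finset.range (ν + 2),
          ((ν + 1).choose k : ℝ) • (r ^ (2 * (ν : ℤ) - 2 * k) • a (n - 2 * k))‖ ≤
        C * 4 ^ (ν + 1) * r ^ ((ν : ℤ) - n - 1)) :
    ∀ j : ℤ, j ≤ -(ν : ℤ) - 2 → a j = 0 := by
  intro j hj
  set n := j + 2 * ν + 2
  obtain ⟨ε, hε, hbound⟩ := ha n
  set S : ℝ → X := fun r => ∑ k ∈ range (ν + 2),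
    ((ν + 1).choose k : ℝ) • (r ^ (2 * (ν : ℤ) - 2 * k) • a (n - 2 * k))
  have h_lim : Tendsto (fun r : ℝ => r ^ (2 : ℤ) • S r) (𝓝[>] 0) (𝓝 (a j)) := by
    have h_sq : Tendsto (fun r : ℝ => r ^ 2) (𝓝[>] 0) (𝓝 0) := by
      simpa using ((continuous_pow 2).tendsto (0 : ℝ)).mono_left nhdsWithin_le_nhds
    have h_poly := (tendsto_sum_pow_smul_nhds_zero (ν + 1)
      fun k => ((ν + 1).choose k : ℝ) • a (n - 2 * k)).comp h_sq
    have h_last : n - 2 * ((ν + 1 : ℕ) : ℤ) = j := by push_cast; ring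
    rw [Nat.choose_self, Nat.cast_one, one_smul, h_last] at h_poly
    refine h_poly.congr' (eventually_nhdsWithin_of_forall fun r hr => ?_)
    exact (zpow_two_smul_sum_eq_sum_sq_pow_smul (ne_of_gt hr) ν _ _).symm
  have h_zero : Tendsto (fun r : ℝ => r ^ (2 : ℤ) • S r) (𝓝[>] 0) (𝓝 0) := by
    refine tendsto_nhdsGT_zero_of_norm_le_mul_zpow (K := C * 4 ^ (ν + 1))
      (m := (ν : ℤ) - n + 1) (by omega) ?_
    filter_upwards [Ioo_mem_nhdsGT hε] with r ⟨hr, hrε⟩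
    calc ‖r ^ (2 : ℤ) • S r‖ = r ^ (2 : ℤ) * ‖S r‖ := by
          rw [norm_smul, Real.norm_of_nonneg (by positivity)]
      _ ≤ r ^ (2 : ℤ) * (C * 4 ^ (ν + 1) * r ^ ((ν : ℤ) - n - 1)) :=
          mul_le_mul_of_nonneg_left (hbound r hr hrε) (by positivity)
      _ = C * 4 ^ (ν + 1) * r ^ ((ν : ℤ) - n + 1) := by
          rw [show (ν : ℤ) - n + 1 = 2 + ((ν : ℤ) - n - 1) by ring, zpow_add₀ hr.ne']
          ring
  exact tendsto_nhds_unique h_lim h_zero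

/-- If the Laurent coefficients `(a_j)_{j ∈ ℤ}` satisfy, for every integer `n`
and all sufficiently small `r > 0`,
`‖∑_{k=0}^{ν+1} binom(ν+1,k) r^{2ν-2k} a_{n-2k}‖ ≤ C 4^{ν+1} r^{ν-n-1}`,
then `a_j = 0` for all `j ≤ -ν-2`. -/
theorem stmt_19 (X : Type*) [NormedAddCommGroup X] [NormedSpace ℂ X]
    [CompleteSpace X] (ν : ℕ) (C : ℝ) (hC : 0 < C) (a : ℤ → X)
    (ha : ∀ n : ℤ, ∃ ε : ℝ, 0 < ε ∧ ∀ r : ℝ, 0 < r → r < ε →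
      ‖∑ k ∈ Finset.range (ν + 2),
          ((ν + 1).choose k : ℝ) • (r ^ (2 * (ν : ℤ) - 2 * k) • a (n - 2 * k))‖ ≤
        C * 4 ^ (ν + 1) * r ^ ((ν : ℤ) - n - 1)) :
    ∀ j : ℤ, j ≤ -(ν : ℤ) - 2 → a j = 0 :=
  stmt_19_general X ν C a ha
end
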